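/- arXiv:2108.07149 — 2 statements merged into one kernel-verified Lean document; each statement's English description precedes it below -/
import Mathlib

section
/- Let q ∈ ℂ with 0 < |q| < 1, let x ∈ ℂ with x ≠ 0, and let y ∈ ℂ be such that y ≠ q^n for every n ∈ ℤ. Then s(qx, y; q) = y·s(x, y; q) + ϑ(x; q). Equivalently, the function x ↦ ϑ(x;q)·κ(x,y;q) satisfies the difference equation f(qx) − y·f(x) = ϑ(x;q). -/
/-!
Since `(-qx)^n = q^n (-x)^n` and `q^n = (q^n - y) + y`, the `n`-th term of `s(qx,y;q)` is `y`
times the `n`-th term of `s(x,y;q)` plus the `n`-th term of `ϑ(x;q)`, so the identity follows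
once both series converge. The theta series is a Jacobi theta series `∑ exp(2πinz + πin²τ)`
with `Im τ > 0`. For all but finitely many `n` we have `|q^n| ≤ 2|q^n - y|`, so the `n`-th term
of `s(x,y;q)` is dominated by twice the `n`-th term of `ϑ(x/q;q)`.
-/

/-- The theta function `ϑ(x;q) := Σ_{n∈ℤ} (−x)^n q^{n(n−1)/2}`. -/
noncomputable def theta (q x : ℂ) : ℂ := ∑' n : ℤ, (-x) ^ n * q ^ (n * (n - 1) / 2)

/-- `s(x,y;q) := Σ_{n∈ℤ} q^{n(n−1)/2}·(−x)^n / (q^n − y)`. -/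
noncomputable def appellS (q x y : ℂ) : ℂ :=
  ∑' n : ℤ, q ^ (n * (n - 1) / 2) * (-x) ^ n / (q ^ n - y)

open Complex Filter
open scoped Real

noncomputable def thetaTerm (q x : ℂ) (n : ℤ) : ℂ := (-x) ^ n * q ^ (n * (n - 1) / 2)

noncomputable def appellTerm (q x y : ℂ) (n : ℤ) : ℂ :=
  q ^ (n * (n - 1) / 2) * (-x) ^ n / (q ^ n - y)

lemma cast_mul_sub_one_div_two {K : Type*} [Field K] [CharZero K] (n : ℤ) :
    ((n * (n - 1) / 2 : ℤ) : K) = (n ^ 2 - n) / 2 := by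
  rw [Int.cast_div n.even_mul_pred_self.two_dvd (by norm_num)]
  push_cast
  ring

lemma im_log_div_two_pi_I_pos {q : ℂ} (hq0 : q ≠ 0) (hq1 : ‖q‖ < 1) :
    0 < (log q / (2 * π * I)).im := by
  have him : (log q / (2 * π * I)).im = -Real.log ‖q‖ / (2 * π) := by
    simp [div_eq_mul_inv, log_re]
  rw [him]
  have := Real.log_neg (norm_pos_iff.mpr hq0) hq1
  exact div_pos (by linarith) (by positivity)

/-- The parameters are `τ = log q / 2πi` and `z` with `e^{2πiz} = -x q^{-1/2}`. -/
lemma thetaTerm_eq_jacobiTheta₂_term {q x : ℂ} (hq : q ≠ 0) (hx : x ≠ 0) (n : ℤ) :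
    thetaTerm q x n =
      jacobiTheta₂_term n ((log (-x) - log q / 2) / (2 * π * I)) (log q / (2 * π * I)) := by
  have hπI : (2 * π * I : ℂ) ≠ 0 := by simp [Real.pi_ne_zero]
  have hexponent : 2 * π * I * n * ((log (-x) - log q / 2) / (2 * π * I))
      + π * I * n ^ 2 * (log q / (2 * π * I))
      = n * log (-x) + ((n * (n - 1) / 2 : ℤ) : ℂ) * log q := by
    rw [cast_mul_sub_one_div_two]
    field_simp
    ring
  rw [thetaTerm, jacobiTheta₂_term, hexponent, exp_add, exp_int_mul, exp_int_mul, exp_log hq,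
    exp_log (neg_ne_zero.mpr hx)]

lemma summable_thetaTerm {q : ℂ} (hq0 : q ≠ 0) (hq1 : ‖q‖ < 1) {x : ℂ} (hx : x ≠ 0) :
    Summable (thetaTerm q x) :=
  ((summable_jacobiTheta₂_term_iff _ _).mpr (im_log_div_two_pi_I_pos hq0 hq1)).congr
    fun n ↦ (thetaTerm_eq_jacobiTheta₂_term hq0 hx n).symm

lemma thetaTerm_div (q x : ℂ) (n : ℤ) : thetaTerm q (x / q) n = thetaTerm q x n / q ^ n := by
  rw [thetaTerm, thetaTerm, ← neg_div, div_zpow]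
  ring

lemma eventually_norm_zpow_le_two_mul_norm_zpow_sub {q : ℂ} (hq0 : q ≠ 0) (hq1 : ‖q‖ < 1)
    (y : ℂ) : ∀ᶠ n : ℤ in cofinite, ‖q ^ n‖ ≤ 2 * ‖q ^ n - y‖ := by
  have hfar : ∀ n : ℤ, 2 * ‖y‖ ≤ ‖q ^ n‖ ∨ 2 * ‖q ^ n‖ ≤ ‖y‖ →
      ‖q ^ n‖ ≤ 2 * ‖q ^ n - y‖ := by
    rintro n (h | h)
    · linarith [norm_sub_norm_le (q ^ n) y]
    · linarith [norm_sub_norm_le y (q ^ n), norm_sub_rev y (q ^ n), norm_nonneg (q ^ n)]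
  have hr0 : 0 < ‖q‖ := norm_pos_iff.mpr hq0
  rw [Int.cofinite_eq, eventually_sup]
  constructor
  · obtain ⟨N, hN⟩ := pow_unbounded_of_one_lt (2 * ‖y‖) ((one_lt_inv₀ hr0).mpr hq1)
    filter_upwards [eventually_le_atBot (-(N : ℤ))] with n hn
    refine hfar n (.inl ?_)
    calc 2 * ‖y‖ ≤ ‖q‖⁻¹ ^ N := hN.le
      _ = ‖q‖ ^ (-(N : ℤ)) := by rw [zpow_neg, zpow_natCast, inv_pow]
      _ ≤ ‖q ^ n‖ := norm_zpow q n ▸ zpow_le_zpow_right_of_le_one₀ hr0 hq1.le hn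
  · rcases eq_or_ne y 0 with rfl | hy
    · exact .of_forall fun n ↦ hfar n (.inl (by simpa using norm_nonneg (q ^ n)))
    obtain ⟨N, hN⟩ := exists_pow_lt_of_lt_one (half_pos (norm_pos_iff.mpr hy)) hq1
    filter_upwards [eventually_ge_atTop (N : ℤ)] with n hn
    have hqn : ‖q ^ n‖ ≤ ‖q‖ ^ N := by
      rw [norm_zpow, ← zpow_natCast]
      exact zpow_le_zpow_right_of_le_one₀ hr0 hq1.le hn
    exact hfar n (.inr (by linarith))

lemma summable_appellTerm {q : ℂ} (hq0 : q ≠ 0) (hq1 : ‖q‖ < 1) {x : ℂ} (hx : x ≠ 0)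
    (y : ℂ) : Summable (appellTerm q x y) := by
  refine ((summable_thetaTerm hq0 hq1 (div_ne_zero hx hq0)).norm.mul_left 2
    ).of_norm_bounded_eventually ?_
  filter_upwards [eventually_norm_zpow_le_two_mul_norm_zpow_sub hq0 hq1 y] with n hn
  have hqn : 0 < ‖q ^ n‖ := norm_pos_iff.mpr (zpow_ne_zero n hq0)
  have hden : 0 < ‖q ^ n - y‖ := by linarith
  have hterm : appellTerm q x y n = thetaTerm q x n / (q ^ n - y) := by
    rw [appellTerm, thetaTerm, mul_comm]
  rw [hterm, thetaTerm_div, norm_div, norm_div, div_le_iff₀ hden]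
  calc ‖thetaTerm q x n‖ = ‖thetaTerm q x n‖ / ‖q ^ n‖ * ‖q ^ n‖ :=
        (div_mul_cancel₀ _ hqn.ne').symm
    _ ≤ ‖thetaTerm q x n‖ / ‖q ^ n‖ * (2 * ‖q ^ n - y‖) := by gcongr
    _ = 2 * (‖thetaTerm q x n‖ / ‖q ^ n‖) * ‖q ^ n - y‖ := by ring

lemma appellTerm_mul_left {q x y : ℂ} {n : ℤ} (hy : y ≠ q ^ n) :
    appellTerm q (q * x) y n = y * appellTerm q x y n + thetaTerm q x n := by
  have hne : q ^ n - y ≠ 0 := sub_ne_zero.mpr hy.symm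
  rw [appellTerm, appellTerm, thetaTerm, neg_mul_eq_mul_neg, mul_zpow]
  field_simp
  ring

/-- The difference equation `s(qx,y;q) = y·s(x,y;q) + ϑ(x;q)` for `0 < |q| < 1`,
`x ≠ 0`, `y ∉ q^ℤ`. -/
theorem appell_lerch_difference_equation (q x y : ℂ)
    (hq0 : 0 < ‖q‖) (hq1 : ‖q‖ < 1)
    (hx : x ≠ 0) (hy : ∀ n : ℤ, y ≠ q ^ n) :
    appellS q (q * x) y = y * appellS q x y + theta q x := by
  have hq : q ≠ 0 := norm_pos_iff.mp hq0
  calc appellS q (q * x) y = ∑' n, (y * appellTerm q x y n + thetaTerm q x n) :=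
        tsum_congr fun n ↦ appellTerm_mul_left (hy n)
    _ = y * appellS q x y + theta q x := by
        rw [((summable_appellTerm hq hq1 hx y).mul_left y).tsum_add (summable_thetaTerm hq hq1 hx),
          tsum_mul_left]
        rfl
end

section
/- Let q ∈ ℂ with 0 < |q| < 1 and let y ∈ ℂ with y ≠ 0. If g : ℂ → ℂ is holomorphic on ℂ ∖ {0} and satisfies g(qx) = −(x·y)^{−1}·g(x) for all x ∈ ℂ ∖ {0}, then there exists c ∈ ℂ such that g(x) = c·ϑ(x·y; q) for all x ∈ ℂ ∖ {0}. (In geometric terms: the space of global sections of the degree-one line bundle Θ(x)⊗L_y^{−1} on the elliptic curve E_q = ℂ*/q^ℤ is one-dimensional, spanned by x ↦ ϑ(xy).) -/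
/-!
Expand `g` in a Laurent series `g x = ∑ aₙ xⁿ` on `ℂ ∖ {0}`, with `aₙ` the average of `z⁻ⁿ g z`
over any circle `|z| = ρ`. Substituting `z ↦ q z` in that average and using the functional
equation gives `aₙ₊₁ = -y qⁿ aₙ`, hence `aₙ = (-y)ⁿ q^(n(n-1)/2) a₀`, and the Laurent series of `g`
is `a₀ ϑ(xy; q)`.
-/

open Complex Metric Real Set

theorem circleIntegral_eq_of_differentiableOn_compl_zero {f : ℂ → ℂ}
    (hf : DifferentiableOn ℂ f {0}ᶜ) {r R : ℝ} (hr : 0 < r) (hR : 0 < R) :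
    (∮ z in C(0, R), f z) = ∮ z in C(0, r), f z := by
  wlog hrR : r ≤ R generalizing r R
  · exact (this hR hr (le_of_not_ge hrR)).symm
  refine circleIntegral_eq_of_differentiable_on_annulus_off_countable hr hrR countable_empty
    (hf.continuousOn.mono ?_) fun z hz => hf.differentiableAt (isOpen_compl_singleton.mem_nhds ?_)
  · rintro z ⟨-, hz⟩ rfl
    exact hz (mem_ball_self hr)
  · rintro rfl
    exact hz.1.2 (mem_closedBall_self hr.le)

theorem circleIntegral_sub_inv_eq_zero_of_lt_norm {x : ℂ} {r : ℝ} (hr : 0 ≤ r) (hrx : r < ‖x‖) :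
    (∮ z in C(0, r), (z - x)⁻¹) = 0 := by
  refine DiffContOnCl.circleIntegral_eq_zero hr <|
    ((differentiableOn_id.sub_const x).inv fun z hz => sub_ne_zero.2 hz).diffContOnCl_ball ?_
  rintro z hz rfl
  exact (mem_closedBall_zero_iff.1 hz).not_gt hrx

/-- `dslope g x` is holomorphic on `ℂ ∖ {0}`, so it has the same integral over both circles; what
remains is `g x` times `∮ (z - x)⁻¹`, which is `2πi` on the outer circle and `0` on the inner. -/
theorem circleIntegral_sub_inv_mul_sub_eq {g : ℂ → ℂ} (hg : DifferentiableOn ℂ g {0}ᶜ) {x : ℂ}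
    {r R : ℝ} (hr : 0 < r) (hrx : r < ‖x‖) (hxR : ‖x‖ < R) :
    (∮ z in C(0, R), (z - x)⁻¹ * g z) - (∮ z in C(0, r), (z - x)⁻¹ * g z) = 2 * π * I * g x := by
  have hx : x ≠ 0 := norm_pos_iff.1 (hr.trans hrx)
  have hd : DifferentiableOn ℂ (dslope g x) {0}ᶜ :=
    (differentiableOn_dslope (isOpen_compl_singleton.mem_nhds hx)).2 hg
  have split : ∀ ρ : ℝ, 0 < ρ → ρ ≠ ‖x‖ → (∮ z in C(0, ρ), (z - x)⁻¹ * g z) =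
      (∮ z in C(0, ρ), dslope g x z) + (∮ z in C(0, ρ), (z - x)⁻¹) * g x := by
    intro ρ hρ hρx
    have hsphere : ∀ z ∈ sphere (0 : ℂ) ρ, z ≠ 0 ∧ z ≠ x := fun z hz =>
      ⟨ne_of_mem_sphere hz hρ.ne', by rintro rfl; exact hρx (mem_sphere_zero_iff_norm.1 hz).symm⟩
    have hinv : ContinuousOn (fun z => (z - x)⁻¹) (sphere 0 ρ) :=
      (continuousOn_id.sub continuousOn_const).inv₀ fun z hz => sub_ne_zero.2 (hsphere z hz).2
    rw [mul_comm _ (g x), ← circleIntegral.integral_const_mul, ← circleIntegral.integral_add]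
    · refine circleIntegral.integral_congr hρ.le fun z hz => ?_
      rw [dslope_of_ne _ (hsphere z hz).2, slope_def_field]
      field_simp [sub_ne_zero.2 (hsphere z hz).2]
      ring
    · exact (hd.continuousOn.mono fun z hz => (hsphere z hz).1).circleIntegrable hρ.le
    · exact (continuousOn_const.mul hinv).circleIntegrable hρ.le
  rw [split R (hr.trans (hrx.trans hxR)) hxR.ne', split r hr hrx.ne,
    circleIntegral_eq_of_differentiableOn_compl_zero hd hr (hr.trans (hrx.trans hxR)),
    circleIntegral.integral_sub_inv_of_mem_ball (mem_ball_zero_iff.2 hxR),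
    circleIntegral_sub_inv_eq_zero_of_lt_norm hr.le hrx]
  ring

theorem circleAverage_const_mul (a : ℂ) (f : ℂ → ℂ) (c : ℂ) (R : ℝ) :
    circleAverage (fun z => a * f z) c R = a * circleAverage f c R :=
  circleAverage_fun_smul (a := a)

theorem circleAverage_comp_mul_left (f : ℂ → ℂ) (q : ℂ) (R : ℝ) :
    circleAverage (fun z => f (q * z)) 0 R = circleAverage f 0 (‖q‖ * R) := by
  -- shifting the angle by `arg q` turns `‖q‖ * z` into `q * z`
  rw [circleAverage_eq_circleAverage_zero_one,
    circleAverage_eq_circleAverage_zero_one (R := ‖q‖ * R), circleAverage_def,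
    circleAverage_eq_integral_add q.arg]
  congr 2 with θ
  simp only [add_zero, circleMap_zero]
  conv_lhs => rw [← norm_mul_exp_arg_mul_I q]
  push_cast
  rw [add_mul, Complex.exp_add]
  ring_nf

theorem circleAverage_mul_sub_inv_mul_eq (g : ℂ → ℂ) (x : ℂ) {ρ : ℝ} (hρ : 0 < ρ) :
    circleAverage (fun z => z * (z - x)⁻¹ * g z) 0 ρ =
      (2 * π * I)⁻¹ * ∮ z in C(0, ρ), (z - x)⁻¹ * g z := by
  rw [circleAverage_eq_circleIntegral hρ.ne', smul_eq_mul]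
  congr 1
  refine circleIntegral.integral_congr hρ.le fun z hz => ?_
  simp only [sub_zero, smul_eq_mul]
  field_simp [ne_of_mem_sphere hz hρ.ne']

theorem hasSum_circleAverage_geometric {f u : ℂ → ℂ} {c : ℂ} {R k : ℝ}
    (hf : ContinuousOn f (sphere c |R|)) (hu : ContinuousOn u (sphere c |R|)) (hk : k < 1)
    (huk : ∀ z ∈ sphere c |R|, ‖u z‖ ≤ k) :
    HasSum (fun n : ℕ => circleAverage (fun z => u z ^ n * f z) c R)
      (circleAverage (fun z => (1 - u z)⁻¹ * f z) c R) := by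
  have hmem : ∀ θ, circleMap c R θ ∈ sphere c |R| := circleMap_mem_sphere' c R
  have hk0 : 0 ≤ k := (norm_nonneg _).trans (huk _ (hmem 0))
  have hfc : Continuous fun θ => f (circleMap c R θ) :=
    hf.comp_continuous (continuous_circleMap c R) hmem
  have huc : Continuous fun θ => u (circleMap c R θ) :=
    hu.comp_continuous (continuous_circleMap c R) hmem
  simp only [circleAverage_def]
  refine HasSum.const_smul _ (intervalIntegral.hasSum_integral_of_dominated_convergence
    (fun n θ => k ^ n * ‖f (circleMap c R θ)‖) (fun n => ?_) (fun n => ?_) ?_ ?_ ?_)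
  · exact ((huc.pow n).mul hfc).aestronglyMeasurable
  · refine Filter.Eventually.of_forall fun θ _ => ?_
    rw [norm_mul, norm_pow]
    gcongr
    exact huk _ (hmem θ)
  · exact Filter.Eventually.of_forall fun θ _ => (summable_geometric_of_lt_one hk0 hk).mul_right _
  · simp only [tsum_mul_right, tsum_geometric_of_lt_one hk0 hk]
    exact (continuous_const.mul hfc.norm).intervalIntegrable _ _
  · refine Filter.Eventually.of_forall fun θ _ => ?_
    exact (hasSum_geometric_of_norm_lt_one ((huk _ (hmem θ)).trans_lt hk)).mul_right _

/-- The `n`-th Laurent coefficient at `0`, `(2πi)⁻¹ ∮ z⁻ⁿ⁻¹ g z dz`, written as a circle average. -/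
noncomputable def laurentCoeff (g : ℂ → ℂ) (n : ℤ) : ℂ :=
  circleAverage (fun z => z ^ (-n) * g z) 0 1

section laurentCoeff

variable {g : ℂ → ℂ}

theorem laurentCoeff_congr {g₁ g₂ : ℂ → ℂ} (h : EqOn g₁ g₂ {0}ᶜ) :
    laurentCoeff g₁ = laurentCoeff g₂ := by
  ext n
  refine circleAverage_congr_sphere fun z hz => ?_
  simp only [h (ne_of_mem_sphere hz (by simp))]

theorem laurentCoeff_const_mul (a : ℂ) (n : ℤ) :
    laurentCoeff (fun z => a * g z) n = a * laurentCoeff g n := by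
  simp only [laurentCoeff, mul_left_comm _ a]
  exact circleAverage_const_mul _ _ _ _

theorem laurentCoeff_inv_mul (n : ℤ) :
    laurentCoeff (fun z => z⁻¹ * g z) n = laurentCoeff g (n + 1) := by
  refine circleAverage_congr_sphere fun z hz => ?_
  have hz : z ≠ 0 := ne_of_mem_sphere hz (by simp)
  simp only [neg_add, zpow_add₀ hz, zpow_neg_one]
  ring

theorem laurentCoeff_eq_circleAverage (hg : DifferentiableOn ℂ g {0}ᶜ) (n : ℤ) {ρ : ℝ}
    (hρ : 0 < ρ) : laurentCoeff g n = circleAverage (fun z => z ^ (-n) * g z) 0 ρ := by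
  have hd : DifferentiableOn ℂ (fun z => (z - 0)⁻¹ • (z ^ (-n) * g z)) {0}ᶜ := fun z hz =>
    (((differentiableAt_id.sub_const 0).inv (by simpa using hz)).smul
      ((differentiableAt_zpow.2 (Or.inl hz)).mul
        (hg.differentiableAt (isOpen_compl_singleton.mem_nhds hz)))).differentiableWithinAt
  rw [laurentCoeff, circleAverage_eq_circleIntegral one_ne_zero,
    circleAverage_eq_circleIntegral hρ.ne',
    circleIntegral_eq_of_differentiableOn_compl_zero hd hρ one_pos]

theorem laurentCoeff_comp_mul (hg : DifferentiableOn ℂ g {0}ᶜ) {q : ℂ} (hq : q ≠ 0) (n : ℤ) :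
    laurentCoeff (fun z => g (q * z)) n = q ^ n * laurentCoeff g n := by
  have h : ∀ z, z ^ (-n) * g (q * z) = q ^ n * ((q * z) ^ (-n) * g (q * z)) := fun z => by
    rw [mul_zpow, zpow_neg q, ← mul_assoc, ← mul_assoc, mul_inv_cancel₀ (zpow_ne_zero n hq),
      one_mul]
  rw [laurentCoeff, funext h, circleAverage_const_mul,
    circleAverage_comp_mul_left (fun w => w ^ (-n) * g w), mul_one,
    laurentCoeff_eq_circleAverage hg n (norm_pos_iff.2 hq)]

/-- Cauchy's formula on an annulus around `x`, with both kernels expanded in geometric series. -/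
theorem hasSum_laurentCoeff_mul_zpow (hg : DifferentiableOn ℂ g {0}ᶜ) {x : ℂ} (hx : x ≠ 0) :
    HasSum (fun n : ℤ => laurentCoeff g n * x ^ n) (g x) := by
  have hx' : 0 < ‖x‖ := norm_pos_iff.2 hx
  obtain ⟨r, hr, hrx⟩ : ∃ r, 0 < r ∧ r < ‖x‖ := ⟨‖x‖ / 2, by positivity, by linarith⟩
  obtain ⟨R, hxR⟩ : ∃ R, ‖x‖ < R := ⟨‖x‖ + 1, by linarith⟩
  have hR : 0 < R := hx'.trans hxR
  have hsphere : ∀ {ρ : ℝ}, 0 < ρ → ∀ z ∈ sphere (0 : ℂ) |ρ|, z ≠ 0 ∧ ‖z‖ = ρ := fun hρ z hz => by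
    rw [abs_of_pos hρ] at hz
    exact ⟨ne_of_mem_sphere hz hρ.ne', mem_sphere_zero_iff_norm.1 hz⟩
  have hgc : ∀ {ρ : ℝ}, 0 < ρ → ContinuousOn g (sphere 0 |ρ|) := fun hρ =>
    hg.continuousOn.mono fun z hz => (hsphere hρ z hz).1
  have houter : HasSum (fun n : ℕ => laurentCoeff g n * x ^ (n : ℤ))
      (circleAverage (fun z => z * (z - x)⁻¹ * g z) 0 R) := by
    have hgeom := hasSum_circleAverage_geometric (u := fun z => x / z) (hgc hR)
      (continuousOn_const.div continuousOn_id fun z hz => (hsphere hR z hz).1)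
      ((div_lt_one hR).2 hxR) fun z hz => by rw [norm_div, (hsphere hR z hz).2]
    convert hgeom using 1
    · ext n
      rw [laurentCoeff_eq_circleAverage hg n hR, mul_comm, ← circleAverage_const_mul]
      congr 1 with z
      simp only [div_pow, zpow_neg, zpow_natCast]
      ring
    · refine circleAverage_congr_sphere fun z hz => ?_
      have hz := (hsphere hR z hz).1
      field_simp
  have hinner : HasSum (fun n : ℕ => laurentCoeff g (-(n + 1)) * x ^ (-((n : ℤ) + 1)))
      (-circleAverage (fun z => z * (z - x)⁻¹ * g z) 0 r) := by
    have hgeom := hasSum_circleAverage_geometric (f := fun z => z / x * g z) (u := fun z => z / x)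
      ((continuousOn_id.div_const x).mul (hgc hr)) (continuousOn_id.div_const x)
      ((div_lt_one hx').2 hrx) fun z hz => by rw [norm_div, (hsphere hr z hz).2]
    convert hgeom using 1
    · ext n
      rw [laurentCoeff_eq_circleAverage hg _ hr, mul_comm, ← circleAverage_const_mul]
      congr 1 with z
      rw [neg_neg, zpow_neg, ← Nat.cast_succ, zpow_natCast, zpow_natCast, div_pow, pow_succ,
        pow_succ]
      ring
    · rw [← neg_one_mul, ← circleAverage_const_mul]
      refine circleAverage_congr_sphere fun z hz => ?_
      have hxz : x - z ≠ 0 := sub_ne_zero.2 fun h => hrx.ne' (by rw [← (hsphere hr z hz).2, h])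
      rw [← neg_sub x z, inv_neg]
      field_simp
  convert HasSum.of_nat_of_neg_add_one (f := fun n : ℤ => laurentCoeff g n * x ^ n) houter hinner
    using 1
  rw [← sub_eq_add_neg, circleAverage_mul_sub_inv_mul_eq g x hR,
    circleAverage_mul_sub_inv_mul_eq g x hr, ← mul_sub,
    circleIntegral_sub_inv_mul_sub_eq hg hr hrx hxR, inv_mul_cancel_left₀ two_pi_I_ne_zero]

theorem laurentCoeff_succ_of_comp_mul_eq {q y : ℂ} (hq : q ≠ 0) (hy : y ≠ 0)
    (hg : DifferentiableOn ℂ g {0}ᶜ) (heq : ∀ x : ℂ, x ≠ 0 → g (q * x) = -(x * y)⁻¹ * g x)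
    (n : ℤ) : laurentCoeff g (n + 1) = -y * q ^ n * laurentCoeff g n := by
  have h : q ^ n * laurentCoeff g n = -y⁻¹ * laurentCoeff g (n + 1) := by
    rw [← laurentCoeff_comp_mul hg hq, ← laurentCoeff_inv_mul, ← laurentCoeff_const_mul]
    refine congrFun (laurentCoeff_congr fun x hx => ?_) n
    simp only [heq x hx, mul_inv, neg_mul]
    ring
  rw [mul_assoc, h]
  field_simp

end laurentCoeff

theorem Int.triangular_add_one (n : ℤ) : (n + 1) * (n + 1 - 1) / 2 = n * (n - 1) / 2 + n := by
  rw [show (n + 1) * (n + 1 - 1) = n * (n - 1) + n * 2 by ring,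
    Int.add_mul_ediv_right _ _ two_ne_zero]

theorem eq_zpow_mul_zpow_of_succ_eq {K : Type*} [Field K] {a : ℤ → K} {c q : K} (hc : c ≠ 0)
    (hq : q ≠ 0) (h : ∀ n : ℤ, a (n + 1) = c * q ^ n * a n) (n : ℤ) :
    a n = c ^ n * q ^ (n * (n - 1) / 2) * a 0 := by
  set b : ℤ → K := fun n => c ^ n * q ^ (n * (n - 1) / 2) * a 0
  have hb : ∀ n : ℤ, b (n + 1) = c * q ^ n * b n := fun n => by
    simp only [b, Int.triangular_add_one, zpow_add₀ hc, zpow_add₀ hq, zpow_one]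
    ring
  show a n = b n
  induction n using Int.induction_on with
  | zero => simp [b]
  | succ k ih => rw [h, hb, ih]
  | pred k ih =>
    refine mul_left_cancel₀ (mul_ne_zero hc (zpow_ne_zero (-(k : ℤ) - 1) hq)) ?_
    rw [← h, ← hb, sub_add_cancel, ih]

theorem sections_degree_one_general (q y : ℂ)
    (hq0 : 0 < ‖q‖) (hy : y ≠ 0)
    (g : ℂ → ℂ)
    (hg : ∀ x : ℂ, x ≠ 0 → DifferentiableAt ℂ g x)
    (heq : ∀ x : ℂ, x ≠ 0 → g (q * x) = -(x * y)⁻¹ * g x) :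
    ∃ c : ℂ, ∀ x : ℂ, x ≠ 0 → g x = c * theta q (x * y) := by
  have hq : q ≠ 0 := norm_pos_iff.1 hq0
  have hg' : DifferentiableOn ℂ g {0}ᶜ := fun x hx => (hg x hx).differentiableWithinAt
  have hcoeff := eq_zpow_mul_zpow_of_succ_eq (neg_ne_zero.2 hy) hq
    (laurentCoeff_succ_of_comp_mul_eq hq hy hg' heq)
  refine ⟨laurentCoeff g 0, fun x hx => ?_⟩
  rw [← (hasSum_laurentCoeff_mul_zpow hg' hx).tsum_eq, theta, ← tsum_mul_left]
  refine tsum_congr fun n => ?_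
  rw [hcoeff, neg_mul_eq_mul_neg, mul_zpow]
  ring

/-- For `0 < |q| < 1` and `y ≠ 0`, any function holomorphic on `ℂ ∖ {0}` satisfying
`g(qx) = −(x·y)⁻¹·g(x)` is a constant multiple of `x ↦ ϑ(x·y;q)`: the space of global
sections of the degree-one line bundle `Θ(x)⊗L_y⁻¹` on `E_q = ℂ*/q^ℤ` is
one-dimensional, spanned by `x ↦ ϑ(xy)`. -/
theorem sections_degree_one (q y : ℂ)
    (hq0 : 0 < ‖q‖) (hq1 : ‖q‖ < 1) (hy : y ≠ 0)
    (g : ℂ → ℂ)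
    (hg : ∀ x : ℂ, x ≠ 0 → DifferentiableAt ℂ g x)
    (heq : ∀ x : ℂ, x ≠ 0 → g (q * x) = -(x * y)⁻¹ * g x) :
    ∃ c : ℂ, ∀ x : ℂ, x ≠ 0 → g x = c * theta q (x * y) :=
  sections_degree_one_general q y hq0 hy g hg heq
end
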